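/- Let λ > 0, 0 < δ ≤ 1/2, b > 0, and let 𝒦 = {(x,y) : 0 < x < λ, (1−δ)x < y < (1+δ)x} be the narrow diagonal cone. Suppose Γ : ℝ² → ℝ is differentiable in y on 𝒦 with Γ(x,y) ≥ (b/2)·y and ∂_y Γ(x,y) ≥ b/2 for all (x,y) ∈ 𝒦. Then ∫_𝒦 K₀(x,y)·∂_y(Γ²)(x,y) dx dy ≥ (1/2)·b²·λ·∫_{1−δ}^{1+δ} s²/(1+s²)² ds. -/

import Mathlib

/-!
On the cone we have `y > 0`, so `K₀ ≥ 0` and `∂_y(Γ²) = 2Γ ∂_yΓ ≥ b² y / 2`; the integrand is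
therefore at least `(b² / 2) K₀(x,y) y`. This weight is homogeneous of degree `-1`, so the
substitution `y = s x` shows that every vertical slice of the cone contributes exactly
`∫_{1-δ}^{1+δ} s²/(1+s²)² ds`, independently of `x`, and integrating over `0 < x < λ` produces the
factor `λ`.
-/

open MeasureTheory

noncomputable def K0 (x y : ℝ) : ℝ := x * y / (x ^ 2 + y ^ 2) ^ 2

open Set intervalIntegral

/-- The narrow diagonal cone `𝒦` is `sectorCone lam (1 - δ) (1 + δ)`. -/
def sectorCone (lam a c : ℝ) : Set (ℝ × ℝ) :=
  {p | 0 < p.1 ∧ p.1 < lam ∧ a * p.1 < p.2 ∧ p.2 < c * p.1}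

lemma isOpen_sectorCone (lam a c : ℝ) : IsOpen (sectorCone lam a c) :=
  (isOpen_lt continuous_const continuous_fst).inter <|
    (isOpen_lt continuous_fst continuous_const).inter <|
      (isOpen_lt (continuous_const.mul continuous_fst) continuous_snd).inter
        (isOpen_lt continuous_snd (continuous_const.mul continuous_fst))

lemma preimage_mk_sectorCone (lam a c x : ℝ) :
    Prod.mk x ⁻¹' sectorCone lam a c = if x ∈ Ioo 0 lam then Ioo (a * x) (c * x) else ∅ := by
  ext y
  split_ifs with hx
  · simp [sectorCone, hx.1, hx.2]
  · simp only [sectorCone, mem_preimage, mem_ofPred_eq, mem_empty_iff_false, iff_false]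
    exact fun hy => hx ⟨hy.1, hy.2.1⟩

lemma K0_nonneg {x y : ℝ} (hx : 0 ≤ x) (hy : 0 ≤ y) : 0 ≤ K0 x y := by
  unfold K0; positivity

lemma K0_mul_snd_nonneg {x : ℝ} (hx : 0 ≤ x) (y : ℝ) : 0 ≤ K0 x y * y := by
  rw [K0, div_mul_eq_mul_div, mul_assoc, ← sq]; positivity

lemma measurable_K0 : Measurable (Function.uncurry K0) := by
  unfold Function.uncurry K0; fun_prop

lemma continuous_K0_mul_snd {x : ℝ} (hx : x ≠ 0) : Continuous fun y => K0 x y * y := by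
  unfold K0
  refine Continuous.mul (Continuous.div (by fun_prop) (by fun_prop) fun y => ?_) continuous_id
  positivity

/-- `K₀(x,y)·y` is homogeneous of degree `-1`, hence `x⁻¹` times a function of `y / x`. -/
lemma K0_mul_snd_eq {x : ℝ} (hx : x ≠ 0) (y : ℝ) :
    K0 x y * y = (y / x) ^ 2 / (1 + (y / x) ^ 2) ^ 2 / x := by
  have : 0 < x ^ 2 + y ^ 2 := by positivity
  unfold K0
  field_simp

lemma integral_K0_mul_snd {x : ℝ} (hx : x ≠ 0) (a c : ℝ) :
    ∫ y in a * x..c * x, K0 x y * y = ∫ s in a..c, s ^ 2 / (1 + s ^ 2) ^ 2 := by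
  simp_rw [K0_mul_snd_eq hx]
  rw [integral_comp_div (fun s => s ^ 2 / (1 + s ^ 2) ^ 2 / x) hx, mul_div_cancel_right₀ _ hx,
    mul_div_cancel_right₀ _ hx, intervalIntegral.integral_div, smul_eq_mul, mul_div_cancel₀ _ hx]

lemma lintegral_Ioo_K0_mul_snd {x : ℝ} (hx : 0 < x) {a c : ℝ} (hac : a ≤ c) :
    ∫⁻ y in Ioo (a * x) (c * x), ENNReal.ofReal (K0 x y * y) =
      ENNReal.ofReal (∫ s in a..c, s ^ 2 / (1 + s ^ 2) ^ 2) := by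
  have hint : IntegrableOn (fun y => K0 x y * y) (Icc (a * x) (c * x)) :=
    (continuous_K0_mul_snd hx.ne').integrableOn_Icc
  rw [← ofReal_integral_eq_lintegral_ofReal (hint.mono_set Ioo_subset_Icc_self)
    (.of_forall fun y => K0_mul_snd_nonneg hx.le y), ← integral_Ioc_eq_integral_Ioo,
    ← integral_of_le (by gcongr), integral_K0_mul_snd hx.ne']

lemma lintegral_sectorCone_K0_mul_snd (lam : ℝ) {a c : ℝ} (hac : a ≤ c) :
    ∫⁻ p in sectorCone lam a c, ENNReal.ofReal (K0 p.1 p.2 * p.2) =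
      ENNReal.ofReal (lam * ∫ s in a..c, s ^ 2 / (1 + s ^ 2) ^ 2) := by
  have hcone := (isOpen_sectorCone lam a c).measurableSet
  have hmeas : Measurable fun p : ℝ × ℝ => ENNReal.ofReal (K0 p.1 p.2 * p.2) :=
    ENNReal.measurable_ofReal.comp (measurable_K0.mul measurable_snd)
  have hslice (x : ℝ) : ∫⁻ y, (sectorCone lam a c).indicator
      (fun p => ENNReal.ofReal (K0 p.1 p.2 * p.2)) (x, y) =
      (Ioo 0 lam).indicator (fun _ => ENNReal.ofReal (∫ s in a..c, s ^ 2 / (1 + s ^ 2) ^ 2)) x := by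
    simp_rw [← indicator_comp_right (Prod.mk x)]
    rw [lintegral_indicator (measurable_prodMk_left hcone),
      preimage_mk_sectorCone]
    split_ifs with hx
    · rw [indicator_of_mem hx]
      exact lintegral_Ioo_K0_mul_snd hx.1 hac
    · rw [indicator_of_notMem hx, Measure.restrict_empty, lintegral_zero_measure]
  rw [← lintegral_indicator hcone, Measure.volume_eq_prod,
    lintegral_prod _ (hmeas.indicator hcone).aemeasurable]
  simp_rw [hslice]
  rw [lintegral_indicator measurableSet_Ioo, setLIntegral_const, Real.volume_Ioo, sub_zero,
    ENNReal.ofReal_mul' (intervalIntegral.integral_nonneg hac fun s _ => by positivity), mul_comm]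

lemma two_mul_sq_mul_le_deriv_sq {g : ℝ → ℝ} {β y : ℝ} (hg : DifferentiableAt ℝ g y)
    (hβ : 0 ≤ β) (hy : 0 ≤ y) (hgy : β * y ≤ g y) (hg' : β ≤ deriv g y) :
    2 * β ^ 2 * y ≤ deriv (fun t => g t ^ 2) y := by
  have hprod : β * y * β ≤ g y * deriv g y :=
    mul_le_mul hgy hg' hβ ((mul_nonneg hβ hy).trans hgy)
  rw [(hg.hasDerivAt.fun_pow 2).deriv]
  simp only [Nat.cast_ofNat, Nat.add_one_sub_one, pow_one]
  linarith

theorem narrow_diagonal_source_lower_bound_general (lam δ b : ℝ)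
    (hδ0 : 0 < δ) (hδ : δ ≤ 1 / 2) (hb : 0 < b)
    (K : Set (ℝ × ℝ))
    (hK : K = {p : ℝ × ℝ | 0 < p.1 ∧ p.1 < lam ∧
      (1 - δ) * p.1 < p.2 ∧ p.2 < (1 + δ) * p.1})
    (Γ : ℝ → ℝ → ℝ)
    (hdiff : ∀ p ∈ K, DifferentiableAt ℝ (fun y' => Γ p.1 y') p.2)
    (hΓ : ∀ p ∈ K, b / 2 * p.2 ≤ Γ p.1 p.2)
    (hΓy : ∀ p ∈ K, b / 2 ≤ deriv (fun y' => Γ p.1 y') p.2) :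
    ENNReal.ofReal
        (1 / 2 * b ^ 2 * lam * ∫ s in (1 - δ)..(1 + δ), s ^ 2 / (1 + s ^ 2) ^ 2)
      ≤ ∫⁻ p in K, ENNReal.ofReal
          (K0 p.1 p.2 * deriv (fun y' => (Γ p.1 y') ^ 2) p.2) := by
  obtain rfl : K = sectorCone lam (1 - δ) (1 + δ) := hK
  calc ENNReal.ofReal (1 / 2 * b ^ 2 * lam * ∫ s in (1 - δ)..(1 + δ), s ^ 2 / (1 + s ^ 2) ^ 2)
      = ∫⁻ p in sectorCone lam (1 - δ) (1 + δ),
          ENNReal.ofReal (b ^ 2 / 2) * ENNReal.ofReal (K0 p.1 p.2 * p.2) := by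
        rw [lintegral_const_mul' _ _ ENNReal.ofReal_ne_top,
          lintegral_sectorCone_K0_mul_snd lam (by linarith), ← ENNReal.ofReal_mul (by positivity)]
        ring_nf
    _ ≤ _ := setLIntegral_mono' (isOpen_sectorCone _ _ _).measurableSet fun p hp => by
        have hy : 0 ≤ p.2 := by nlinarith [hp.1, hp.2.2.1]
        rw [← ENNReal.ofReal_mul (by positivity)]
        refine ENNReal.ofReal_le_ofReal ?_
        calc b ^ 2 / 2 * (K0 p.1 p.2 * p.2) = K0 p.1 p.2 * (2 * (b / 2) ^ 2 * p.2) := by ring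
          _ ≤ _ := mul_le_mul_of_nonneg_left
            (two_mul_sq_mul_le_deriv_sq (hdiff p hp) (by positivity) hy (hΓ p hp) (hΓy p hp))
            (K0_nonneg hp.1.le hy)

/-- Narrow diagonal source lower bound: on the narrow diagonal cone
`𝒦 = {0 < x < λ, (1−δ)x < y < (1+δ)x}`, if `Γ(x,y) ≥ (b/2)·y` and
`∂_yΓ(x,y) ≥ b/2`, then
`∫_𝒦 K₀·∂_y(Γ²) ≥ (1/2)·b²·λ·∫_{1−δ}^{1+δ} s²/(1+s²)² ds`. -/
theorem narrow_diagonal_source_lower_bound (lam δ b : ℝ)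
    (hlam : 0 < lam) (hδ0 : 0 < δ) (hδ : δ ≤ 1 / 2) (hb : 0 < b)
    (K : Set (ℝ × ℝ))
    (hK : K = {p : ℝ × ℝ | 0 < p.1 ∧ p.1 < lam ∧
      (1 - δ) * p.1 < p.2 ∧ p.2 < (1 + δ) * p.1})
    (Γ : ℝ → ℝ → ℝ)
    (hdiff : ∀ p ∈ K, DifferentiableAt ℝ (fun y' => Γ p.1 y') p.2)
    (hΓ : ∀ p ∈ K, b / 2 * p.2 ≤ Γ p.1 p.2)
    (hΓy : ∀ p ∈ K, b / 2 ≤ deriv (fun y' => Γ p.1 y') p.2) :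
    ENNReal.ofReal
        (1 / 2 * b ^ 2 * lam * ∫ s in (1 - δ)..(1 + δ), s ^ 2 / (1 + s ^ 2) ^ 2)
      ≤ ∫⁻ p in K, ENNReal.ofReal
          (K0 p.1 p.2 * deriv (fun y' => (Γ p.1 y') ^ 2) p.2) :=
  narrow_diagonal_source_lower_bound_general lam δ b hδ0 hδ hb K hK Γ hdiff hΓ hΓy
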